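/- The relation 'f > g if and only if f - g lies in the union over n in Z of the sets q^n(c + qA) with c a positive rational number', where A is the ring of rational functions in q without pole at q=0, defines a strict total order on the field Q(q) of rational functions, compatible with addition and with multiplication by positive elements. -/
import Mathlib

open Polynomial

/-- `A`: rational functions in `q` without pole at `q = 0`. -/
def Areg : Set (RatFunc ℚ) := {f | Polynomial.eval 0 f.denom ≠ 0}

/-- `Pos f` : `f ∈ ⋃_{n ∈ ℤ} q^n (c + q A)` for some rational `c > 0`. -/
def Pos (f : RatFunc ℚ) : Prop :=
  ∃ (n : ℤ) (c : ℚ) (a : RatFunc ℚ), 0 < c ∧ a ∈ Areg ∧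
    f = (RatFunc.X : RatFunc ℚ) ^ n * ((c : RatFunc ℚ) + RatFunc.X * a)

/-- `f > g` iff `f - g` lies in the union of the sets `q^n(c + qA)`. -/
def gtRel (f g : RatFunc ℚ) : Prop := Pos (f - g)

lemma areg_of_dvd {f : RatFunc ℚ} {d : Polynomial ℚ} (h : f.denom ∣ d)
    (hd : d.eval 0 ≠ 0) : f ∈ Areg := by
  obtain ⟨e, he⟩ := h
  intro h0
  exact hd (by rw [he, Polynomial.eval_mul, h0, zero_mul])

lemma areg_add {a b : RatFunc ℚ} (ha : a ∈ Areg) (hb : b ∈ Areg) : a + b ∈ Areg :=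
  areg_of_dvd (RatFunc.denom_add_dvd a b)
    (by rw [Polynomial.eval_mul]; exact mul_ne_zero ha hb)

lemma areg_mul {a b : RatFunc ℚ} (ha : a ∈ Areg) (hb : b ∈ Areg) : a * b ∈ Areg :=
  areg_of_dvd (RatFunc.denom_mul_dvd a b)
    (by rw [Polynomial.eval_mul]; exact mul_ne_zero ha hb)

lemma areg_X : (RatFunc.X : RatFunc ℚ) ∈ Areg := by
  show (RatFunc.X : RatFunc ℚ).denom.eval 0 ≠ 0
  rw [RatFunc.denom_X]; simp

lemma cast_eq_C (c : ℚ) : (c : RatFunc ℚ) = RatFunc.C c := (eq_ratCast RatFunc.C c).symm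

lemma areg_cast (c : ℚ) : ((c : ℚ) : RatFunc ℚ) ∈ Areg := by
  show ((c : ℚ) : RatFunc ℚ).denom.eval 0 ≠ 0
  rw [cast_eq_C, RatFunc.denom_C]; simp

lemma areg_neg {a : RatFunc ℚ} (ha : a ∈ Areg) : -a ∈ Areg := by
  have := areg_mul (areg_cast (-1)) ha
  rwa [show (((-1 : ℚ) : RatFunc ℚ)) = -1 by push_cast; ring, neg_one_mul] at this

lemma areg_pow (k : ℕ) : (RatFunc.X : RatFunc ℚ) ^ k ∈ Areg := by
  induction k with
  | zero =>
    rw [pow_zero]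
    show (1 : RatFunc ℚ).denom.eval 0 ≠ 0
    rw [RatFunc.denom_one]; simp
  | succ n ih => rw [pow_succ]; exact areg_mul ih areg_X

noncomputable def ev (f : RatFunc ℚ) : ℚ := RatFunc.eval (RingHom.id ℚ) 0 f

lemma eval₂_id_eq (p : Polynomial ℚ) : Polynomial.eval₂ (RingHom.id ℚ) 0 p = p.eval 0 := rfl

lemma ev_aux {c : ℚ} {a : RatFunc ℚ} (ha : a ∈ Areg) :
    ev ((c : RatFunc ℚ) + RatFunc.X * a) = c := by
  have hXa : RatFunc.X * a ∈ Areg := areg_mul areg_X ha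
  have h1 : Polynomial.eval₂ (RingHom.id ℚ) 0 ((c : RatFunc ℚ)).denom ≠ 0 := by
    rw [eval₂_id_eq, cast_eq_C, RatFunc.denom_C]; simp
  have h2 : Polynomial.eval₂ (RingHom.id ℚ) 0 ((RatFunc.X * a : RatFunc ℚ)).denom ≠ 0 := by
    rw [eval₂_id_eq]; exact hXa
  have h3 : Polynomial.eval₂ (RingHom.id ℚ) 0 ((RatFunc.X : RatFunc ℚ)).denom ≠ 0 := by
    rw [eval₂_id_eq]; exact areg_X
  have h4 : Polynomial.eval₂ (RingHom.id ℚ) 0 (a.denom) ≠ 0 := by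
    rw [eval₂_id_eq]; exact ha
  unfold ev
  rw [RatFunc.eval_add _ _ h1 h2, RatFunc.eval_mul _ _ h3 h4, RatFunc.eval_X, cast_eq_C,
    RatFunc.eval_C, zero_mul, add_zero, RingHom.id_apply]

lemma base_ne_zero {c : ℚ} {a : RatFunc ℚ} (hc : c ≠ 0) (ha : a ∈ Areg) :
    (c : RatFunc ℚ) + RatFunc.X * a ≠ 0 := by
  intro h
  apply hc
  have := ev_aux (c := c) ha
  rw [h] at this
  simpa [ev] using this.symm

lemma pos_ne_zero {f : RatFunc ℚ} (hf : Pos f) : f ≠ 0 := by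
  obtain ⟨n, c, a, hc, ha, rfl⟩ := hf
  exact mul_ne_zero (zpow_ne_zero n RatFunc.X_ne_zero) (base_ne_zero hc.ne' ha)

lemma pos_add_aux {n m : ℤ} (h : n ≤ m) {c d : ℚ} {a b : RatFunc ℚ}
    (hc : 0 < c) (hd : 0 < d) (ha : a ∈ Areg) (hb : b ∈ Areg) :
    Pos (RatFunc.X ^ n * ((c : RatFunc ℚ) + RatFunc.X * a)
      + RatFunc.X ^ m * ((d : RatFunc ℚ) + RatFunc.X * b)) := by
  set k : ℕ := (m - n).toNat with hk
  have hm : (RatFunc.X : RatFunc ℚ) ^ m = RatFunc.X ^ n * RatFunc.X ^ k := by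
    rw [← zpow_natCast (RatFunc.X : RatFunc ℚ) k, ← zpow_add₀ RatFunc.X_ne_zero]
    congr 1
    rw [hk, Int.toNat_of_nonneg (sub_nonneg.2 h)]
    ring
  rw [hm]
  cases k with
  | zero =>
    refine ⟨n, c + d, a + b, by positivity, areg_add ha hb, ?_⟩
    simp only [cast_eq_C, map_add]
    ring
  | succ j =>
    refine ⟨n, c, a + RatFunc.X ^ j * ((d : RatFunc ℚ) + RatFunc.X * b), hc,
      areg_add ha (areg_mul (areg_pow j) (areg_add (areg_cast d) (areg_mul areg_X hb))), ?_⟩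
    rw [pow_succ]
    ring

lemma pos_add {f g : RatFunc ℚ} (hf : Pos f) (hg : Pos g) : Pos (f + g) := by
  obtain ⟨n, c, a, hc, ha, rfl⟩ := hf
  obtain ⟨m, d, b, hd, hb, rfl⟩ := hg
  rcases le_total n m with h | h
  · exact pos_add_aux h hc hd ha hb
  · rw [add_comm]; exact pos_add_aux h hd hc hb ha

lemma pos_mul {f g : RatFunc ℚ} (hf : Pos f) (hg : Pos g) : Pos (f * g) := by
  obtain ⟨n, c, a, hc, ha, rfl⟩ := hf
  obtain ⟨m, d, b, hd, hb, rfl⟩ := hg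
  refine ⟨n + m, c * d,
    (c : RatFunc ℚ) * b + (d : RatFunc ℚ) * a + RatFunc.X * (a * b), by positivity,
    areg_add (areg_add (areg_mul (areg_cast c) hb) (areg_mul (areg_cast d) ha))
      (areg_mul areg_X (areg_mul ha hb)), ?_⟩
  rw [zpow_add₀ RatFunc.X_ne_zero]
  simp only [cast_eq_C, map_mul]
  ring

lemma pos_trichotomy {f : RatFunc ℚ} (hf : f ≠ 0) : Pos f ∨ Pos (-f) := by
  have hnum : f.num ≠ 0 := RatFunc.num_ne_zero hf
  have hden : f.denom ≠ 0 := f.denom_ne_zero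
  obtain ⟨p, hp_eq, hp⟩ := f.num.exists_eq_pow_rootMultiplicity_mul_and_not_dvd hnum 0
  obtain ⟨e, he_eq, he⟩ := f.denom.exists_eq_pow_rootMultiplicity_mul_and_not_dvd hden 0
  rw [map_zero, sub_zero] at hp_eq hp he_eq he
  have hp0 : p.eval 0 ≠ 0 := fun h =>
    hp (X_dvd_iff.2 (by rwa [coeff_zero_eq_eval_zero]))
  have he0 : e.eval 0 ≠ 0 := fun h =>
    he (X_dvd_iff.2 (by rwa [coeff_zero_eq_eval_zero]))
  set c : ℚ := p.eval 0 / e.eval 0 with hcdef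
  have hc : c ≠ 0 := div_ne_zero hp0 he0
  have hXdvd : (X : Polynomial ℚ) ∣ (p - Polynomial.C c * e) := by
    rw [X_dvd_iff, coeff_zero_eq_eval_zero]
    simp only [Polynomial.eval_sub, Polynomial.eval_mul, Polynomial.eval_C]
    rw [hcdef, div_mul_cancel₀ _ he0, sub_self]
  obtain ⟨r, hr⟩ := hXdvd
  have hpr : p = Polynomial.C c * e + X * r := by linear_combination hr
  set mp := f.num.rootMultiplicity 0
  set mq := f.denom.rootMultiplicity 0
  set A : Polynomial ℚ →+* RatFunc ℚ := algebraMap (Polynomial ℚ) (RatFunc ℚ) with hA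
  have heA : A e ≠ 0 := RatFunc.algebraMap_ne_zero (fun h => he0 (by rw [h]; simp))
  have key : f = RatFunc.X ^ ((mp : ℤ) - (mq : ℤ)) * ((c : RatFunc ℚ)
      + RatFunc.X * (A r / A e)) := by
    conv_lhs => rw [← f.num_div_denom]
    rw [hp_eq, he_eq, hpr]
    rw [map_mul, map_mul, map_pow, map_pow, map_add, map_mul, map_mul,
      RatFunc.algebraMap_X, cast_eq_C, ← RatFunc.algebraMap_C c]
    rw [← hA]
    rw [zpow_sub₀ RatFunc.X_ne_zero, zpow_natCast, zpow_natCast]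
    have hXn : (RatFunc.X : RatFunc ℚ) ^ mq ≠ 0 := pow_ne_zero _ RatFunc.X_ne_zero
    field_simp
    try ring
  have ha : A r / A e ∈ Areg := areg_of_dvd (RatFunc.denom_div_dvd r e) he0
  rcases lt_or_gt_of_ne hc with hneg | hpos
  · right
    refine ⟨(mp : ℤ) - (mq : ℤ), -c, -(A r / A e), by linarith, areg_neg ha, ?_⟩
    rw [key]
    simp only [cast_eq_C, map_neg]
    ring
  · left
    exact ⟨(mp : ℤ) - (mq : ℤ), c, A r / A e, hpos, ha, key⟩

/-- The relation `gtRel` is a strict total order on `ℚ(q)`, compatible with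
addition and with multiplication by positive elements. -/
theorem gtRel_strict_total_order_compatible :
    (∀ f : RatFunc ℚ, ¬ gtRel f f) ∧
    (∀ f g h : RatFunc ℚ, gtRel f g → gtRel g h → gtRel f h) ∧
    (∀ f g : RatFunc ℚ, gtRel f g ∨ f = g ∨ gtRel g f) ∧
    (∀ f g h : RatFunc ℚ, gtRel f g → gtRel (f + h) (g + h)) ∧
    (∀ f g h : RatFunc ℚ, gtRel h 0 → gtRel f g → gtRel (h * f) (h * g)) := by
  refine ⟨?_, ?_, ?_, ?_, ?_⟩
  · intro f hf
    exact pos_ne_zero (by simpa [gtRel] using hf) (by simp)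
  · intro f g h h1 h2
    have := pos_add h1 h2
    simpa [gtRel, sub_add_sub_cancel] using this
  · intro f g
    rcases eq_or_ne f g with h | h
    · exact Or.inr (Or.inl h)
    · rcases pos_trichotomy (sub_ne_zero.2 h) with hp | hp
      · exact Or.inl hp
      · exact Or.inr (Or.inr (by simpa [gtRel, neg_sub] using hp))
  · intro f g h h1
    simpa [gtRel, add_sub_add_right_eq_sub] using h1
  · intro f g h h1 h2
    have := pos_mul (by simpa [gtRel] using h1) h2
    simpa [gtRel, mul_sub] using this
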